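/- For any N ≥ 3, there exist a countable set X, a cost c : X^N → (0,∞], a probability measure μ on X, and a finite-cost symmetric transport plan γ on X^N with all marginals equal to μ, such that γ is c-cyclically monotone but not optimal. -/

import Mathlib

/-!
Take `X = ℕ` and let `bump n j` be the point whose coordinates all equal `n` except the `j`-th,
which is `n + 1`. The plan `γ` lives on the bumps of even level (cost `2`), the competitor `γ'`
on the bumps of odd level and the origin (cost `1`); every other point costs `∞`. With the
weights `μ {n} = (N - 2) (N - 1)⁻¹ ^ (n + 1)`, which satisfy `(N - 1) μ {n + 1} = μ {n}`, a bump
block of level `n` and mass `μ {n + 1}` has marginal `μ {n} δₙ + μ {n + 1} δₙ₊₁`, so both plans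
have marginal `μ`, and `γ'` is strictly cheaper.

`γ` is still cyclically monotone. With `a = (N - 1) ^ 2 + 1`, the potentials
`φ₊ (2k) = a ^ k`, `φ₋ (2k + 1) = (N - 1) a ^ k` (zero at the other parity) satisfy
`∑ᵢ φ₊ (xᵢ) = ∑ᵢ φ₋ (xᵢ)` on even bumps and `∑ᵢ φ₋ (xᵢ) + 1 ≤ ∑ᵢ φ₊ (xᵢ)` on odd bumps and the
origin. If `α ≪ γ` is finitely supported and `α'` has the same marginals, integrating both
potentials against `α` and `α'` (the integrals against `α` are finite) shows that `α'` gives no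
mass to the cost-`1` points, so `α'` costs at least `2`, the cost of `α`. For `γ` itself the
potentials have infinite integrals, which is how optimality fails.
-/

open MeasureTheory
open scoped ENNReal

theorem lintegral_sum_comp_eval_congr {ι X : Type*} [Fintype ι] [MeasurableSpace X]
    {α α' : Measure (ι → X)} (h : ∀ i, α'.map (fun x => x i) = α.map (fun x => x i))
    {φ : X → ℝ≥0∞} (hφ : Measurable φ) :
    ∫⁻ x, ∑ i, φ (x i) ∂α' = ∫⁻ x, ∑ i, φ (x i) ∂α := by
  have hm (i : ι) : Measurable fun x : ι → X => φ (x i) := hφ.comp (measurable_pi_apply i)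
  rw [lintegral_finsetSum _ fun i _ => hm i, lintegral_finsetSum _ fun i _ => hm i]
  refine Finset.sum_congr rfl fun i _ => ?_
  rw [← lintegral_map hφ (measurable_pi_apply i), h i, lintegral_map hφ (measurable_pi_apply i)]

theorem measure_eq_zero_of_lintegral_gap {Y : Type*} [MeasurableSpace Y] {α α' : Measure Y}
    {f g : Y → ℝ≥0∞} {s : Set Y} (hs : MeasurableSet s)
    (hf : ∫⁻ y, f y ∂α' = ∫⁻ y, f y ∂α) (hg : ∫⁻ y, g y ∂α' = ∫⁻ y, g y ∂α)
    (hfg : f =ᵐ[α] g) (hfin : ∫⁻ y, f y ∂α ≠ ∞)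
    (hgap : ∀ᵐ y ∂α', g y + s.indicator 1 y ≤ f y) : α' s = 0 := by
  have hg' : ∫⁻ y, g y ∂α' ≠ ∞ := by rwa [hg, ← lintegral_congr_ae hfg]
  refine le_antisymm (ENNReal.le_of_add_le_add_left hg' ?_) zero_le
  calc ∫⁻ y, g y ∂α' + α' s = ∫⁻ y, g y + s.indicator 1 y ∂α' := by
        rw [lintegral_add_right _ (measurable_one.indicator hs), lintegral_indicator_one hs]
    _ ≤ ∫⁻ y, f y ∂α' := lintegral_mono_ae hgap
    _ = ∫⁻ y, g y ∂α' + 0 := by rw [add_zero, hf, lintegral_congr_ae hfg, hg]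

theorem lintegral_ne_top_of_finite_support {Y : Type*} [MeasurableSpace Y]
    [MeasurableSingletonClass Y] [Countable Y] {α : Measure Y} [IsFiniteMeasure α]
    (hα : {y | α {y} ≠ 0}.Finite) {f : Y → ℝ≥0∞} (hf : ∀ y, f y ≠ ∞) :
    ∫⁻ y, f y ∂α ≠ ∞ := by
  rw [lintegral_countable', tsum_eq_sum (s := hα.toFinset) fun y hy => by simp_all]
  exact ENNReal.sum_ne_top.2 fun y _ => ENNReal.mul_ne_top (hf y) (measure_ne_top α _)

namespace MeasureTheory.Measure

variable {α : Type*} [MeasurableSpace α]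

theorem sum_even_add_odd (μ : ℕ → Measure α) :
    sum (fun k => μ (2 * k) + μ (2 * k + 1)) = sum μ := by
  ext s hs
  simp only [sum_apply _ hs, add_apply]
  rw [ENNReal.tsum_add]
  exact tsum_even_add_odd (f := fun n => μ n s) ENNReal.summable ENNReal.summable

theorem sum_eq_zero_add (μ : ℕ → Measure α) : sum μ = μ 0 + sum fun n => μ (n + 1) := by
  ext s hs
  simp only [sum_apply _ hs, add_apply]
  exact tsum_eq_zero_add' ENNReal.summable

end MeasureTheory.Measure

namespace CyclicallyMonotoneCounterexample

noncomputable section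

variable {N : ℕ}

def bump (n : ℕ) (j : Fin N) : Fin N → ℕ := fun i => if i = j then n + 1 else n

theorem bump_apply_comm (n : ℕ) (i j : Fin N) : bump n j i = bump n i j := by
  simp only [bump, eq_comm]

theorem sum_bump_apply {M : Type*} [AddCommMonoid M] (f : ℕ → M) (n : ℕ) (j : Fin N) :
    ∑ i, f (bump n j i) = f (n + 1) + (N - 1) • f n := by
  classical
  rw [Fintype.sum_eq_add_sum_compl j, Finset.sum_congr rfl fun i hi => by
    rw [bump, if_neg (Finset.mem_compl.1 hi ∘ Finset.mem_singleton.2)]]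
  simp [bump, Finset.card_compl]

theorem bump_comp_perm (n : ℕ) (j : Fin N) (σ : Equiv.Perm (Fin N)) :
    bump n j ∘ σ = bump n (σ.symm j) := by
  funext i
  simp only [bump, Function.comp_apply, Equiv.eq_symm_apply]

theorem eq_of_bump_eq (hN : 3 ≤ N) {n n' : ℕ} {j j' : Fin N} (h : bump n j = bump n' j') :
    n = n' := by
  obtain ⟨i, hij, hij'⟩ := Fin.exists_ne_and_ne_of_two_lt j j' hN
  simpa [bump, hij, hij'] using congrFun h i

theorem bump_ne_zero (n : ℕ) (j : Fin N) : bump n j ≠ 0 := fun h => by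
  simpa [bump] using congrFun h j

def evenBumps (N : ℕ) : Set (Fin N → ℕ) := {x | ∃ k j, x = bump (2 * k) j}

def oddBumpsOrZero (N : ℕ) : Set (Fin N → ℕ) := {x | x = 0 ∨ ∃ k j, x = bump (2 * k + 1) j}

theorem notMem_oddBumpsOrZero_of_mem_evenBumps (hN : 3 ≤ N) {x : Fin N → ℕ}
    (hx : x ∈ evenBumps N) : x ∉ oddBumpsOrZero N := by
  obtain ⟨k, j, rfl⟩ := hx
  rintro (h | ⟨k', j', h⟩)
  · exact bump_ne_zero _ _ h
  · have := eq_of_bump_eq hN h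
    omega

open Classical in
def cost (N : ℕ) (x : Fin N → ℕ) : ℝ≥0∞ :=
  if x ∈ evenBumps N then 2 else if x ∈ oddBumpsOrZero N then 1 else ∞

theorem cost_pos (x : Fin N → ℕ) : 0 < cost N x := by
  unfold cost
  split_ifs <;> simp

theorem cost_of_mem_evenBumps {x : Fin N → ℕ} (hx : x ∈ evenBumps N) : cost N x = 2 := by
  simp [cost, hx]

theorem cost_of_mem_oddBumpsOrZero (hN : 3 ≤ N) {x : Fin N → ℕ} (hx : x ∈ oddBumpsOrZero N) :
    cost N x = 1 := by
  rw [cost, if_neg fun h => notMem_oddBumpsOrZero_of_mem_evenBumps hN h hx, if_pos hx]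

theorem mem_or_mem_of_cost_ne_top {x : Fin N → ℕ} (hx : cost N x ≠ ∞) :
    x ∈ evenBumps N ∨ x ∈ oddBumpsOrZero N := by
  by_contra h
  simp_all [cost]

theorem lintegral_cost_of_ae_mem_evenBumps {ρ : Measure (Fin N → ℕ)} [IsProbabilityMeasure ρ]
    (h : ∀ᵐ x ∂ρ, x ∈ evenBumps N) : ∫⁻ x, cost N x ∂ρ = 2 := by
  rw [lintegral_congr_ae (h.mono fun x hx => cost_of_mem_evenBumps hx), lintegral_const,
    measure_univ, mul_one]

theorem lintegral_cost_of_ae_mem_oddBumpsOrZero (hN : 3 ≤ N) {ρ : Measure (Fin N → ℕ)}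
    [IsProbabilityMeasure ρ] (h : ∀ᵐ x ∂ρ, x ∈ oddBumpsOrZero N) : ∫⁻ x, cost N x ∂ρ = 1 := by
  rw [lintegral_congr_ae (h.mono fun x hx => cost_of_mem_oddBumpsOrZero hN hx), lintegral_const,
    measure_univ, mul_one]

def weight (N n : ℕ) : ℝ≥0∞ := (N - 2 : ℕ) * ((N - 1 : ℕ) : ℝ≥0∞)⁻¹ ^ (n + 1)

theorem natCast_sub_one_mul_inv (hN : 3 ≤ N) :
    ((N - 1 : ℕ) : ℝ≥0∞) * ((N - 1 : ℕ) : ℝ≥0∞)⁻¹ = 1 :=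
  ENNReal.mul_inv_cancel (Nat.cast_ne_zero.2 (by omega)) (ENNReal.natCast_ne_top _)

theorem nsmul_weight_succ (hN : 3 ≤ N) (n : ℕ) : (N - 1) • weight N (n + 1) = weight N n := by
  set u := ((N - 1 : ℕ) : ℝ≥0∞)⁻¹
  calc (N - 1) • weight N (n + 1)
      = (N - 2 : ℕ) * u ^ (n + 1) * ((N - 1 : ℕ) * u) := by
        rw [nsmul_eq_mul, weight, pow_succ]; ring
    _ = weight N n := by rw [natCast_sub_one_mul_inv hN, mul_one, weight]

theorem tsum_weight (hN : 3 ≤ N) : ∑' n, weight N n = 1 := by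
  set u := ((N - 1 : ℕ) : ℝ≥0∞)⁻¹
  have hu : u ≠ ∞ := ENNReal.inv_ne_top.2 (Nat.cast_ne_zero.2 (by omega))
  have hsub : 1 - u = (N - 2 : ℕ) * u := by
    refine ENNReal.sub_eq_of_eq_add hu ?_
    rw [← natCast_sub_one_mul_inv hN, ← add_one_mul]
    exact_mod_cast congrArg (fun m : ℕ => (m : ℝ≥0∞) * u) (by omega : N - 1 = N - 2 + 1)
  have hne : ((N - 2 : ℕ) : ℝ≥0∞) * u ≠ 0 :=
    mul_ne_zero (Nat.cast_ne_zero.2 (by omega)) (ENNReal.inv_ne_zero.2 (ENNReal.natCast_ne_top _))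
  simp only [weight, pow_succ', ← mul_assoc]
  rw [ENNReal.tsum_mul_left, ENNReal.tsum_geometric, hsub,
    ENNReal.mul_inv_cancel hne (ENNReal.mul_ne_top (ENNReal.natCast_ne_top _) hu)]

def bumpMeasure (N n : ℕ) : Measure (Fin N → ℕ) := Measure.sum fun j => Measure.dirac (bump n j)

def marginal (N : ℕ) : Measure ℕ := Measure.sum fun n => weight N n • Measure.dirac n

def plan (N : ℕ) : Measure (Fin N → ℕ) :=
  Measure.sum fun k => weight N (2 * k + 1) • bumpMeasure N (2 * k)

def cheaperPlan (N : ℕ) : Measure (Fin N → ℕ) :=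
  weight N 0 • Measure.dirac 0 +
    Measure.sum fun k => weight N (2 * k + 2) • bumpMeasure N (2 * k + 1)

theorem map_eval_smul_bumpMeasure (hN : 3 ≤ N) (n : ℕ) (i : Fin N) :
    (weight N (n + 1) • bumpMeasure N n).map (fun x => x i)
      = weight N n • Measure.dirac n + weight N (n + 1) • Measure.dirac (n + 1) := by
  rw [Measure.map_smul, bumpMeasure, Measure.map_sum (measurable_pi_apply i).aemeasurable]
  simp_rw [Measure.map_dirac, Measure.sum_fintype, bump_apply_comm _ i]
  rw [sum_bump_apply Measure.dirac, smul_add, ← nsmul_weight_succ hN n,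
    ← Nat.cast_smul_eq_nsmul ℝ≥0∞, smul_smul, mul_comm, add_comm, nsmul_eq_mul]

theorem map_eval_plan (hN : 3 ≤ N) (i : Fin N) : (plan N).map (fun x => x i) = marginal N := by
  rw [plan, Measure.map_sum (measurable_pi_apply i).aemeasurable]
  simp_rw [map_eval_smul_bumpMeasure hN]
  exact Measure.sum_even_add_odd fun n => weight N n • Measure.dirac n

theorem map_eval_cheaperPlan (hN : 3 ≤ N) (i : Fin N) :
    (cheaperPlan N).map (fun x => x i) = marginal N := by
  rw [marginal, Measure.sum_eq_zero_add, cheaperPlan, Measure.map_add _ _ (measurable_pi_apply i),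
    Measure.map_smul, Measure.map_dirac, Measure.map_sum (measurable_pi_apply i).aemeasurable]
  simp_rw [map_eval_smul_bumpMeasure hN]
  exact congrArg _ (Measure.sum_even_add_odd fun n => weight N (n + 1) • Measure.dirac (n + 1))

theorem map_comp_perm_plan (σ : Equiv.Perm (Fin N)) : (plan N).map (fun x => x ∘ σ) = plan N := by
  have hσ : Measurable fun x : Fin N → ℕ => x ∘ σ := measurable_of_countable _
  simp only [plan, bumpMeasure, Measure.map_sum hσ.aemeasurable, Measure.map_smul,
    Measure.map_dirac, bump_comp_perm]
  congr! 3 with k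
  exact Measure.sum_comp_equiv σ.symm fun j => Measure.dirac (bump (2 * k) j)

theorem isProbabilityMeasure_marginal (hN : 3 ≤ N) : IsProbabilityMeasure (marginal N) :=
  ⟨by simp [marginal, tsum_weight hN]⟩

theorem isProbabilityMeasure_of_map_eval_eq_marginal (hN : 3 ≤ N) {ρ : Measure (Fin N → ℕ)}
    {i : Fin N} (h : ρ.map (fun x => x i) = marginal N) : IsProbabilityMeasure ρ :=
  have : IsProbabilityMeasure (ρ.map fun x => x i) := h ▸ isProbabilityMeasure_marginal hN
  Measure.isProbabilityMeasure_of_map fun x => x i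

theorem ae_plan_mem_evenBumps : ∀ᵐ x ∂plan N, x ∈ evenBumps N := by
  simp only [plan, bumpMeasure, Measure.ae_sum_iff]
  exact fun k => Measure.ae_smul_measure (Measure.ae_sum_iff.2 fun j =>
    (ae_dirac_iff (Set.to_countable (evenBumps N)).measurableSet).2 ⟨k, j, rfl⟩) _

theorem ae_cheaperPlan_mem_oddBumpsOrZero : ∀ᵐ x ∂cheaperPlan N, x ∈ oddBumpsOrZero N := by
  have hmeas := (Set.to_countable (oddBumpsOrZero N)).measurableSet
  simp only [cheaperPlan, bumpMeasure, ae_add_measure_iff, Measure.ae_sum_iff]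
  exact ⟨Measure.ae_smul_measure ((ae_dirac_iff hmeas).2 (Or.inl rfl)) _,
    fun k => Measure.ae_smul_measure (Measure.ae_sum_iff.2 fun j =>
      (ae_dirac_iff hmeas).2 (Or.inr ⟨k, j, rfl⟩)) _⟩

def evenPotential (N n : ℕ) : ℕ := if Even n then ((N - 1) ^ 2 + 1) ^ (n / 2) else 0

def oddPotential (N n : ℕ) : ℕ := if Even n then 0 else (N - 1) * ((N - 1) ^ 2 + 1) ^ (n / 2)

theorem sum_evenPotential_eq_sum_oddPotential {x : Fin N → ℕ} (hx : x ∈ evenBumps N) :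
    ∑ i, evenPotential N (x i) = ∑ i, oddPotential N (x i) := by
  obtain ⟨k, j, rfl⟩ := hx
  have h : (2 * k + 1) / 2 = k := by omega
  rw [sum_bump_apply (evenPotential N), sum_bump_apply (oddPotential N)]
  simp [evenPotential, oddPotential, h]

theorem sum_oddPotential_add_one_le (hN : 3 ≤ N) {x : Fin N → ℕ} (hx : x ∈ oddBumpsOrZero N) :
    ∑ i, oddPotential N (x i) + 1 ≤ ∑ i, evenPotential N (x i) := by
  obtain rfl | ⟨k, j, rfl⟩ := hx
  · simp [evenPotential, oddPotential]
    omega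
  · have h₁ : (2 * k + 1) / 2 = k := by omega
    have h₂ : (2 * k + 1 + 1) / 2 = k + 1 := by omega
    have h₃ : Even (2 * k + 1 + 1) := ⟨k + 1, by ring⟩
    have h₄ : 1 ≤ ((N - 1) ^ 2 + 1) ^ k := Nat.one_le_pow _ _ (by omega)
    rw [sum_bump_apply (evenPotential N), sum_bump_apply (oddPotential N)]
    simp [evenPotential, oddPotential, h₁, h₂, h₃, pow_succ _ k]
    nlinarith

theorem lintegral_cost_le_of_absolutelyContinuous_plan (hN : 3 ≤ N)
    {α α' : Measure (Fin N → ℕ)} [IsProbabilityMeasure α] [IsProbabilityMeasure α']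
    (hfin : {x | α {x} ≠ 0}.Finite) (hac : α ≪ plan N)
    (hmarg : ∀ i, α'.map (fun x => x i) = α.map (fun x => x i)) :
    ∫⁻ x, cost N x ∂α ≤ ∫⁻ x, cost N x ∂α' := by
  have hα : ∀ᵐ x ∂α, x ∈ evenBumps N := hac.ae_le ae_plan_mem_evenBumps
  rw [lintegral_cost_of_ae_mem_evenBumps hα]
  by_cases htop : α' {x | cost N x = ∞} = 0
  swap
  · rw [lintegral_eq_top_of_measure_eq_top_ne_zero (measurable_of_countable _).aemeasurable htop]
    exact le_top
  have hα' : ∀ᵐ x ∂α', x ∈ evenBumps N ∨ x ∈ oddBumpsOrZero N :=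
    (measure_eq_zero_iff_ae_notMem.1 htop).mono fun x hx => mem_or_mem_of_cost_ne_top hx
  have hodd : α' (oddBumpsOrZero N) = 0 := by
    refine measure_eq_zero_of_lintegral_gap (Set.to_countable _).measurableSet
      (lintegral_sum_comp_eval_congr (φ := fun n => (evenPotential N n : ℝ≥0∞)) hmarg
        (measurable_of_countable _))
      (lintegral_sum_comp_eval_congr (φ := fun n => (oddPotential N n : ℝ≥0∞)) hmarg
        (measurable_of_countable _))
      (hα.mono fun x hx => by dsimp only; exact_mod_cast sum_evenPotential_eq_sum_oddPotential hx)
      (lintegral_ne_top_of_finite_support hfin fun x => by simp) (hα'.mono fun x hx => ?_)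
    rcases hx with hx | hx
    · rw [Set.indicator_of_notMem (notMem_oddBumpsOrZero_of_mem_evenBumps hN hx), add_zero]
      exact_mod_cast (sum_evenPotential_eq_sum_oddPotential hx).ge
    · rw [Set.indicator_of_mem hx, Pi.one_apply]
      exact_mod_cast sum_oddPotential_add_one_le hN hx
  refine (lintegral_cost_of_ae_mem_evenBumps ?_).ge
  filter_upwards [hα', measure_eq_zero_iff_ae_notMem.1 hodd] with x hx hx'
  exact hx.resolve_right hx'

end

end CyclicallyMonotoneCounterexample

open CyclicallyMonotoneCounterexample in
theorem stmt18 (N : ℕ) (hN : 3 ≤ N) :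
    ∃ (X : Type) (_ : MeasurableSpace X) (_ : MeasurableSingletonClass X),
      Countable X ∧
      ∃ (c : (Fin N → X) → ℝ≥0∞) (μ : Measure X) (γ : Measure (Fin N → X)),
        IsProbabilityMeasure μ ∧ IsProbabilityMeasure γ ∧
        -- c takes values in (0, ∞]
        (∀ x, 0 < c x) ∧
        -- γ is symmetric
        (∀ σ : Equiv.Perm (Fin N), Measure.map (fun x => x ∘ σ) γ = γ) ∧
        -- all marginals of γ equal μ
        (∀ i : Fin N, Measure.map (fun x => x i) γ = μ) ∧
        -- γ has finite cost
        (∫⁻ x, c x ∂γ < ⊤) ∧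
        -- γ is c-cyclically monotone: every finitely supported probability
        -- measure α ≪ γ minimizes cost among plans with the same marginals
        (∀ α α' : Measure (Fin N → X), IsProbabilityMeasure α →
          IsProbabilityMeasure α' → ({x | α {x} ≠ 0}).Finite → α ≪ γ →
          (∀ i : Fin N, Measure.map (fun x => x i) α'
              = Measure.map (fun x => x i) α) →
          ∫⁻ x, c x ∂α ≤ ∫⁻ x, c x ∂α') ∧
        -- γ is not optimal
        (∃ γ' : Measure (Fin N → X), IsProbabilityMeasure γ' ∧
          (∀ i : Fin N, Measure.map (fun x => x i) γ' = μ) ∧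
          ∫⁻ x, c x ∂γ' < ∫⁻ x, c x ∂γ) := by
  have i₀ : Fin N := ⟨0, by omega⟩
  have := isProbabilityMeasure_of_map_eval_eq_marginal hN (map_eval_plan hN i₀)
  have := isProbabilityMeasure_of_map_eval_eq_marginal hN (map_eval_cheaperPlan hN i₀)
  have hcost := lintegral_cost_of_ae_mem_evenBumps (ae_plan_mem_evenBumps (N := N))
  have hcost' := lintegral_cost_of_ae_mem_oddBumpsOrZero hN ae_cheaperPlan_mem_oddBumpsOrZero
  refine ⟨ℕ, inferInstance, inferInstance, inferInstance, cost N, marginal N, plan N,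
    isProbabilityMeasure_marginal hN, inferInstance, cost_pos, map_comp_perm_plan,
    map_eval_plan hN, by simp [hcost], fun α α' _ _ hfin hac hmarg =>
      lintegral_cost_le_of_absolutelyContinuous_plan hN hfin hac hmarg,
    cheaperPlan N, inferInstance, map_eval_cheaperPlan hN, by simp [hcost, hcost']⟩
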